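/- arXiv:2604.11952 — 4 statements merged into one kernel-verified Lean document; each statement's English description precedes it below -/
import Mathlib

section
/- Let S be a (nonempty) finite type, ψ, φ : S → ℂ unit vectors, and k ≥ 1. Let μ be the k-fold product of the probability measure on S assigning mass |ψ x|² to each x (a measure on Fin k → S), and for a sample X : Fin k → S define γ(X) := (1/k) · Σ_{i ∈ Fin k} φ(X i) / ψ(X i). Then (i) ∫ γ dμ = ⟨ψ, φ⟩ (γ is an unbiased estimator of the inner product), and (ii) for every δ > 0, μ { X : |γ(X) − ⟨ψ, φ⟩| ≥ δ } ≤ 1 / (k · δ²). -/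
open MeasureTheory

noncomputable def measurementMeasure {S : Type*} [Fintype S] [MeasurableSpace S]
    (ψ : S → ℂ) : Measure S :=
  Measure.sum fun x : S => (ENNReal.ofReal (‖ψ x‖ ^ 2)) • Measure.dirac x

lemma measurementMeasure_singleton {S : Type*} [Fintype S] [MeasurableSpace S]
    [MeasurableSingletonClass S] (ψ : S → ℂ) (x : S) :
    measurementMeasure ψ {x} = ENNReal.ofReal (‖ψ x‖ ^ 2) := by
  rw [measurementMeasure, Measure.sum_apply _ (measurableSet_singleton x), tsum_fintype]
  rw [Finset.sum_eq_single x]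
  · simp
  · intro b _ hb
    rw [Measure.smul_apply, Measure.dirac_apply' _ (measurableSet_singleton x)]
    simp [Set.indicator, hb]
  · simp

lemma measurementMeasure_prob {S : Type*} [Fintype S] [MeasurableSpace S]
    [MeasurableSingletonClass S] (ψ : S → ℂ) (hψ : ∑ x : S, ‖ψ x‖ ^ 2 = 1) :
    IsProbabilityMeasure (measurementMeasure ψ) := by
  constructor
  rw [measurementMeasure, Measure.sum_apply _ MeasurableSet.univ, tsum_fintype]
  simp only [Measure.smul_apply, Measure.dirac_apply_of_mem (Set.mem_univ _), smul_eq_mul,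
    mul_one]
  rw [← ENNReal.ofReal_sum_of_nonneg (fun x _ => by positivity), hψ, ENNReal.ofReal_one]

lemma sum_pi_prod {S : Type*} [Fintype S] {k : ℕ} (G : Fin k → S → ℂ) :
    ∑ X : Fin k → S, ∏ i, G i (X i) = ∏ i, ∑ x, G i x := by
  classical
  rw [Finset.prod_univ_sum, Fintype.piFinset_univ]

lemma sum_w_single {S : Type*} [Fintype S] {k : ℕ} (W : S → ℂ) (hW : ∑ x, W x = 1)
    (g : S → ℂ) (i : Fin k) :
    ∑ X : Fin k → S, (∏ l, W (X l)) * g (X i) = ∑ x, W x * g x := by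
  classical
  set G : Fin k → S → ℂ := Function.update (fun _ => W) i (fun x => W x * g x) with hGdef
  have hGi : G i = fun x => W x * g x := Function.update_self _ _ _
  have hGl : ∀ l, l ≠ i → G l = W := fun l hl => Function.update_of_ne hl _ _
  have hprod : ∀ X : Fin k → S, ∏ l ∈ Finset.univ.erase i, G l (X l)
      = ∏ l ∈ Finset.univ.erase i, W (X l) :=
    fun X => Finset.prod_congr rfl (fun l hl => by rw [hGl l (Finset.ne_of_mem_erase hl)])
  have key : ∀ X : Fin k → S, (∏ l, W (X l)) * g (X i) = ∏ l, G l (X l) := by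
    intro X
    rw [← Finset.mul_prod_erase Finset.univ (fun l => W (X l)) (Finset.mem_univ i),
        ← Finset.mul_prod_erase Finset.univ (fun l => G l (X l)) (Finset.mem_univ i),
        hprod X]
    simp only [hGi]
    ring
  simp only [key]
  rw [sum_pi_prod G,
      ← Finset.mul_prod_erase Finset.univ (fun l => ∑ x, G l x) (Finset.mem_univ i)]
  have hone : ∏ l ∈ Finset.univ.erase i, ∑ x, G l x = 1 := by
    rw [Finset.prod_congr rfl (fun l hl => by rw [hGl l (Finset.ne_of_mem_erase hl)] :
      ∀ l ∈ Finset.univ.erase i, (∑ x, G l x) = ∑ x, W x), hW, Finset.prod_const_one]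
  rw [hone, mul_one]
  simp only [hGi]

lemma sum_w_pair {S : Type*} [Fintype S] {k : ℕ} (W : S → ℂ) (hW : ∑ x, W x = 1)
    (g h : S → ℂ) (i j : Fin k) (hij : i ≠ j) :
    ∑ X : Fin k → S, (∏ l, W (X l)) * (g (X i) * h (X j))
      = (∑ x, W x * g x) * (∑ x, W x * h x) := by
  classical
  set G : Fin k → S → ℂ :=
    Function.update (Function.update (fun _ => W) i (fun x => W x * g x)) j
      (fun x => W x * h x) with hGdef
  have hGi : G i = fun x => W x * g x := by
    rw [hGdef, Function.update_of_ne hij, Function.update_self]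
  have hGj : G j = fun x => W x * h x := Function.update_self _ _ _
  have hGl : ∀ l, l ≠ i → l ≠ j → G l = W := fun l h1 h2 => by
    rw [hGdef, Function.update_of_ne h2, Function.update_of_ne h1]
  have hji : j ∈ Finset.univ.erase i := Finset.mem_erase.2 ⟨hij.symm, Finset.mem_univ j⟩
  have expand : ∀ F : Fin k → ℂ,
      ∏ l, F l = F i * (F j * ∏ l ∈ (Finset.univ.erase i).erase j, F l) := by
    intro F
    rw [← Finset.mul_prod_erase Finset.univ F (Finset.mem_univ i),
        ← Finset.mul_prod_erase _ F hji]
  have hprod : ∀ X : Fin k → S, ∏ l ∈ (Finset.univ.erase i).erase j, G l (X l)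
      = ∏ l ∈ (Finset.univ.erase i).erase j, W (X l) :=
    fun X => Finset.prod_congr rfl (fun l hl => by
      rw [hGl l (Finset.ne_of_mem_erase (Finset.mem_of_mem_erase hl))
            (Finset.ne_of_mem_erase hl)])
  have key : ∀ X : Fin k → S, (∏ l, W (X l)) * (g (X i) * h (X j)) = ∏ l, G l (X l) := by
    intro X
    rw [expand (fun l => W (X l)), expand (fun l => G l (X l)), hprod X]
    simp only [hGi, hGj]
    ring
  simp only [key]
  rw [sum_pi_prod G, expand (fun l => ∑ x, G l x)]
  have hone : ∏ l ∈ (Finset.univ.erase i).erase j, ∑ x, G l x = 1 := by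
    rw [Finset.prod_congr rfl (fun l hl => by
        rw [hGl l (Finset.ne_of_mem_erase (Finset.mem_of_mem_erase hl))
              (Finset.ne_of_mem_erase hl)] :
      ∀ l ∈ (Finset.univ.erase i).erase j, (∑ x, G l x) = ∑ x, W x), hW,
      Finset.prod_const_one]
  rw [hone, mul_one]
  simp only [hGi, hGj]

/-- Unbiasedness and Chebyshev tail bound for the importance-sampling estimator of the
inner product: for unit vectors `ψ, φ`, sampling `k ≥ 1` independent points
`X 0, …, X (k-1)` from the measurement distribution of `ψ` (so the sample lives in
`Fin k → S` with law `μ` the `k`-fold product measure), the estimator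
`γ X = (1/k) ∑ i, φ (X i) / ψ (X i)` has mean `⟨ψ, φ⟩ = ∑ x, conj (ψ x) * φ x`, and
for every `δ > 0`, `μ {X : |γ X − ⟨ψ, φ⟩| ≥ δ} ≤ 1 / (k δ²)`. -/
theorem inner_product_estimator_unbiased_and_chebyshev
    {S : Type*} [Fintype S] [Nonempty S] [MeasurableSpace S] [MeasurableSingletonClass S]
    (ψ φ : S → ℂ)
    (hψ : ∑ x : S, ‖ψ x‖ ^ 2 = 1)
    (hφ : ∑ x : S, ‖φ x‖ ^ 2 = 1)
    (k : ℕ) (hk : 1 ≤ k) :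
    (∫ X : Fin k → S, ((k : ℂ))⁻¹ * ∑ i : Fin k, φ (X i) / ψ (X i)
        ∂(Measure.pi fun _ : Fin k => measurementMeasure ψ))
      = ∑ x : S, (starRingEnd ℂ) (ψ x) * φ x ∧
    ∀ δ : ℝ, 0 < δ →
      (Measure.pi fun _ : Fin k => measurementMeasure ψ)
          {X : Fin k → S | δ ≤
            ‖((k : ℂ))⁻¹ * (∑ i : Fin k, φ (X i) / ψ (X i))
              - ∑ x : S, (starRingEnd ℂ) (ψ x) * φ x‖}
        ≤ ENNReal.ofReal (1 / (k * δ ^ 2)) := by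
  classical
  haveI : IsProbabilityMeasure (measurementMeasure ψ) := measurementMeasure_prob ψ hψ
  set μ : Measure (Fin k → S) := Measure.pi fun _ : Fin k => measurementMeasure ψ with hμdef
  haveI : IsProbabilityMeasure μ := by rw [hμdef]; infer_instance
  have hkR : (0 : ℝ) < (k : ℝ) := by exact_mod_cast Nat.lt_of_lt_of_le Nat.zero_lt_one hk
  have hkC : (k : ℂ) ≠ 0 := Nat.cast_ne_zero.mpr (by omega)
  set f : S → ℂ := fun x => φ x / ψ x with hfdef
  set m : ℂ := ∑ x, (starRingEnd ℂ) (ψ x) * φ x with hmdef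
  set c : ℂ := ((k : ℂ))⁻¹ with hcdef
  set Wr : S → ℝ := fun x => ‖ψ x‖ ^ 2 with hWrdef
  set wr : (Fin k → S) → ℝ := fun X => ∏ l, Wr (X l) with hwrdef
  set Wc : S → ℂ := fun x => ((Wr x : ℝ) : ℂ) with hWcdef
  have hWrnn : ∀ x, 0 ≤ Wr x := fun x => by positivity
  have hwrnn : ∀ X, 0 ≤ wr X := fun X => Finset.prod_nonneg fun l _ => hWrnn _
  have hμX : ∀ X : Fin k → S, μ {X} = ENNReal.ofReal (wr X) := by
    intro X
    rw [hμdef, ← Set.univ_pi_singleton X, Measure.pi_pi]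
    simp only [measurementMeasure_singleton]
    rw [← ENNReal.ofReal_prod_of_nonneg (fun l _ => hWrnn _)]
  have hμXr : ∀ X, (μ {X}).toReal = wr X := fun X => by
    rw [hμX, ENNReal.toReal_ofReal (hwrnn X)]
  have hintC : ∀ g : (Fin k → S) → ℂ, ∫ X, g X ∂μ = ∑ X, ((wr X : ℝ) : ℂ) * g X := by
    intro g
    rw [integral_fintype (Integrable.of_finite)]
    exact Finset.sum_congr rfl fun X _ => by rw [measureReal_def, hμXr, Complex.real_smul]
  have hintR : ∀ g : (Fin k → S) → ℝ, ∫ X, g X ∂μ = ∑ X, wr X * g X := by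
    intro g
    rw [integral_fintype (Integrable.of_finite)]
    exact Finset.sum_congr rfl fun X _ => by rw [measureReal_def, hμXr, smul_eq_mul]
  have hWcsum : ∑ x, Wc x = 1 := by
    rw [hWcdef]
    rw [← Complex.ofReal_sum]
    rw [hWrdef]
    exact_mod_cast congrArg (fun r : ℝ => (r : ℂ)) hψ
  have hwrc : ∀ X : Fin k → S, ((wr X : ℝ) : ℂ) = ∏ l, Wc (X l) := by
    intro X
    rw [hwrdef, hWcdef, Complex.ofReal_prod]
  have hmean1 : ∑ x, Wc x * f x = m := by
    rw [hmdef]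
    refine Finset.sum_congr rfl fun x _ => ?_
    by_cases hx : ψ x = 0
    · simp [hWcdef, hWrdef, hfdef, hx]
    · have hw : Wc x = (starRingEnd ℂ) (ψ x) * ψ x := by
        rw [hWcdef, hWrdef]
        simp only [Complex.sq_norm]
        push_cast [Complex.normSq_eq_conj_mul_self]
        rfl
      rw [hw, hfdef]
      field_simp
  have hconjWc : ∀ x, (starRingEnd ℂ) (Wc x) = Wc x := fun x => Complex.conj_ofReal _
  have hconjm : ∑ x, Wc x * (starRingEnd ℂ) (f x) = (starRingEnd ℂ) m := by
    rw [← hmean1, map_sum]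
    exact Finset.sum_congr rfl fun x _ => by rw [map_mul, hconjWc]
  set s2 : ℝ := ∑ x, Wr x * Complex.normSq (f x) with hs2def
  have hs2le : s2 ≤ 1 := by
    rw [hs2def, ← hφ]
    refine Finset.sum_le_sum fun x _ => ?_
    by_cases hx : ψ x = 0
    · simp only [hWrdef, hx, map_zero]
      simp
    · have : Wr x * Complex.normSq (f x) = ‖φ x‖ ^ 2 := by
        simp only [hWrdef, hfdef, Complex.normSq_div, Complex.sq_norm]
        rw [mul_comm, div_mul_cancel₀]
        simpa [Complex.normSq_eq_zero] using hx
      rw [this]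
  have hs2c : ∑ x, Wc x * (f x * (starRingEnd ℂ) (f x)) = ((s2 : ℝ) : ℂ) := by
    rw [hs2def, Complex.ofReal_sum]
    refine Finset.sum_congr rfl fun x _ => ?_
    rw [Complex.mul_conj, hWcdef, Complex.ofReal_mul]
  set γ : (Fin k → S) → ℂ := fun X => c * ∑ i, f (X i) with hγdef
  -- first moment
  have hE1 : ∑ X : Fin k → S, ((wr X : ℝ) : ℂ) * γ X = m := by
    have h1 : ∀ X : Fin k → S, ((wr X : ℝ) : ℂ) * γ X
        = c * ∑ i, (∏ l, Wc (X l)) * f (X i) := by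
      intro X
      simp only [hγdef, hwrc X, Finset.mul_sum]
      exact Finset.sum_congr rfl fun i _ => by ring
    simp only [h1]
    rw [← Finset.mul_sum, Finset.sum_comm]
    have h2 : ∀ i : Fin k, ∑ X : Fin k → S, (∏ l, Wc (X l)) * f (X i) = m := by
      intro i
      rw [sum_w_single Wc hWcsum f i, hmean1]
    rw [Finset.sum_congr rfl fun i _ => h2 i, Finset.sum_const, Finset.card_univ,
      Fintype.card_fin, nsmul_eq_mul, hcdef]
    rw [inv_mul_cancel_left₀ hkC]
  -- second moment
  have hT : ∀ i j : Fin k, ∑ X : Fin k → S,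
      (∏ l, Wc (X l)) * (f (X i) * (starRingEnd ℂ) (f (X j)))
      = if i = j then ((s2 : ℝ) : ℂ) else m * (starRingEnd ℂ) m := by
    intro i j
    by_cases hij : i = j
    · subst hij
      rw [if_pos rfl, ← hs2c]
      exact sum_w_single Wc hWcsum (fun x => f x * (starRingEnd ℂ) (f x)) i
    · rw [if_neg hij, ← hconjm, ← hmean1]
      exact sum_w_pair Wc hWcsum f (fun x => (starRingEnd ℂ) (f x)) i j hij
  have hE2 : ∑ X : Fin k → S, ((wr X : ℝ) : ℂ) * (γ X * (starRingEnd ℂ) (γ X))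
      = c * ((s2 : ℝ) : ℂ) + (1 - c) * (m * (starRingEnd ℂ) m) := by
    have hcconj : (starRingEnd ℂ) c = c := by
      rw [hcdef, map_inv₀, Complex.conj_natCast]
    have h1 : ∀ X : Fin k → S, ((wr X : ℝ) : ℂ) * (γ X * (starRingEnd ℂ) (γ X))
        = c * c * ∑ i, ∑ j, (∏ l, Wc (X l)) * (f (X i) * (starRingEnd ℂ) (f (X j))) := by
      intro X
      simp only [hγdef, hwrc X, map_mul, map_sum, hcconj, Finset.mul_sum, Finset.sum_mul]
      rw [Finset.sum_comm]
      refine Finset.sum_congr rfl fun i _ => Finset.sum_congr rfl fun j _ => by ring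
    simp only [h1]
    rw [← Finset.mul_sum, Finset.sum_comm]
    have h2 : ∑ i : Fin k, ∑ X : Fin k → S,
        ∑ j, (∏ l, Wc (X l)) * (f (X i) * (starRingEnd ℂ) (f (X j)))
        = ∑ i : Fin k, ∑ j : Fin k,
            (if i = j then ((s2 : ℝ) : ℂ) else m * (starRingEnd ℂ) m) := by
      refine Finset.sum_congr rfl fun i _ => ?_
      rw [Finset.sum_comm]
      exact Finset.sum_congr rfl fun j _ => hT i j
    rw [h2]
    have h3 : ∀ i : Fin k, ∑ j : Fin k,
        (if i = j then ((s2 : ℝ) : ℂ) else m * (starRingEnd ℂ) m)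
        = (k : ℂ) * (m * (starRingEnd ℂ) m) + (((s2 : ℝ) : ℂ) - m * (starRingEnd ℂ) m) := by
      intro i
      have : ∀ j : Fin k, (if i = j then ((s2 : ℝ) : ℂ) else m * (starRingEnd ℂ) m)
          = m * (starRingEnd ℂ) m
            + (if i = j then ((s2 : ℝ) : ℂ) - m * (starRingEnd ℂ) m else 0) := by
        intro j
        by_cases hij : i = j <;> simp [hij]
      simp only [this]
      rw [Finset.sum_add_distrib, Finset.sum_const, Finset.card_univ, Fintype.card_fin,
        nsmul_eq_mul, Finset.sum_ite_eq, if_pos (Finset.mem_univ i)]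
    rw [Finset.sum_congr rfl fun i _ => h3 i, Finset.sum_const, Finset.card_univ,
      Fintype.card_fin, nsmul_eq_mul]
    rw [hcdef]
    field_simp
    ring
  -- sum of weights is one
  have hsum1 : ∑ X : Fin k → S, ((wr X : ℝ) : ℂ) = 1 := by
    simp only [hwrc]
    rw [sum_pi_prod (fun _ x => Wc x)]
    simp only [hWcsum, Finset.prod_const_one]
  have hconjγ : ∑ X : Fin k → S, ((wr X : ℝ) : ℂ) * (starRingEnd ℂ) (γ X)
      = (starRingEnd ℂ) m := by
    rw [← hE1, map_sum]
    exact Finset.sum_congr rfl fun X _ => by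
      simp only [map_mul, Complex.conj_ofReal]
  -- variance
  set Vr : ℝ := ∑ X : Fin k → S, wr X * Complex.normSq (γ X - m) with hVrdef
  have hVc : ((Vr : ℝ) : ℂ)
      = c * (((s2 : ℝ) : ℂ) - m * (starRingEnd ℂ) m) := by
    have expand : ∀ X : Fin k → S,
        ((wr X : ℝ) : ℂ) * ((γ X - m) * (starRingEnd ℂ) (γ X - m))
        = ((wr X : ℝ) : ℂ) * (γ X * (starRingEnd ℂ) (γ X))
          - (((wr X : ℝ) : ℂ) * γ X) * (starRingEnd ℂ) m
          - m * (((wr X : ℝ) : ℂ) * (starRingEnd ℂ) (γ X))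
          + ((wr X : ℝ) : ℂ) * (m * (starRingEnd ℂ) m) := by
      intro X
      rw [map_sub]
      ring
    have step : ((Vr : ℝ) : ℂ)
        = ∑ X : Fin k → S, ((wr X : ℝ) : ℂ) * ((γ X - m) * (starRingEnd ℂ) (γ X - m)) := by
      rw [hVrdef, Complex.ofReal_sum]
      exact Finset.sum_congr rfl fun X _ => by
        rw [Complex.mul_conj, Complex.ofReal_mul]
    have hB : ∑ X : Fin k → S, (((wr X : ℝ) : ℂ) * γ X) * (starRingEnd ℂ) m
        = m * (starRingEnd ℂ) m := by rw [← Finset.sum_mul, hE1]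
    have hC : ∑ X : Fin k → S, m * (((wr X : ℝ) : ℂ) * (starRingEnd ℂ) (γ X))
        = m * (starRingEnd ℂ) m := by rw [← Finset.mul_sum, hconjγ]
    have hD : ∑ X : Fin k → S, ((wr X : ℝ) : ℂ) * (m * (starRingEnd ℂ) m)
        = m * (starRingEnd ℂ) m := by rw [← Finset.sum_mul, hsum1, one_mul]
    rw [step]
    simp only [expand]
    rw [Finset.sum_add_distrib, Finset.sum_sub_distrib, Finset.sum_sub_distrib,
      hE2, hB, hC, hD]
    ring
  have hVr : Vr = (1 / (k : ℝ)) * (s2 - Complex.normSq m) := by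
    have : ((Vr : ℝ) : ℂ) = (((1 / (k : ℝ)) * (s2 - Complex.normSq m) : ℝ) : ℂ) := by
      rw [hVc, Complex.mul_conj, hcdef]
      push_cast
      ring
    exact_mod_cast this
  have hVle : Vr ≤ 1 / (k : ℝ) := by
    rw [hVr]
    have h1 : s2 - Complex.normSq m ≤ 1 := by
      have := Complex.normSq_nonneg m
      linarith
    calc (1 / (k : ℝ)) * (s2 - Complex.normSq m) ≤ (1 / (k : ℝ)) * 1 := by
          apply mul_le_mul_of_nonneg_left h1
          positivity
      _ = 1 / (k : ℝ) := mul_one _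
  constructor
  · rw [hintC]
    exact hE1
  · intro δ hδ
    have hsetEq : {X : Fin k → S | δ ≤
        ‖((k : ℂ))⁻¹ * (∑ i : Fin k, φ (X i) / ψ (X i))
          - ∑ x : S, (starRingEnd ℂ) (ψ x) * φ x‖}
        = {X : Fin k → S | δ ^ 2 ≤ Complex.normSq (γ X - m)} := by
      ext X
      simp only [Set.mem_setOf_eq]
      have habs : ‖((k : ℂ))⁻¹ * (∑ i : Fin k, φ (X i) / ψ (X i))
          - ∑ x : S, (starRingEnd ℂ) (ψ x) * φ x‖ = ‖γ X - m‖ := rfl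
      rw [habs, ← Complex.sq_norm]
      constructor
      · intro h
        exact pow_le_pow_left₀ hδ.le h 2
      · intro h
        exact le_of_pow_le_pow_left₀ two_ne_zero (norm_nonneg _) h
    rw [hsetEq]
    have hmarkov := mul_meas_ge_le_integral_of_nonneg
      (μ := μ) (f := fun X => Complex.normSq (γ X - m))
      (ae_of_all _ fun X => Complex.normSq_nonneg _) (Integrable.of_finite) (δ ^ 2)
    rw [hintR] at hmarkov
    have hmark2 : δ ^ 2 * (μ {X : Fin k → S | δ ^ 2 ≤ Complex.normSq (γ X - m)}).toReal
        ≤ 1 / (k : ℝ) := le_trans hmarkov (by rw [← hVrdef] at *; exact hVle)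
    have hne : μ {X : Fin k → S | δ ^ 2 ≤ Complex.normSq (γ X - m)} ≠ ⊤ :=
      measure_ne_top μ _
    rw [← ENNReal.ofReal_toReal hne]
    apply ENNReal.ofReal_le_ofReal
    have hδ2 : (0 : ℝ) < δ ^ 2 := by positivity
    rw [le_div_iff₀ (by positivity : (0:ℝ) < (k : ℝ) * δ ^ 2)]
    calc (μ _).toReal * ((k : ℝ) * δ ^ 2)
        = (δ ^ 2 * (μ _).toReal) * (k : ℝ) := by ring
      _ ≤ (1 / (k : ℝ)) * (k : ℝ) := by
          apply mul_le_mul_of_nonneg_right hmark2 hkR.le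
      _ = 1 := by field_simp
end

section
/- Let n ≥ 1, let ψ, φ : (Fin n → Bool) → ℂ be unit vectors, and let δ be a real number with 2^(−n) < δ ≤ 1. If |1 − ⟨ψ, φ⟩| > δ, then Σ over those x ∈ {0,1}^n with |φ x − ψ x| ≥ 2^(−100·n) of |ψ x|² is at least δ²/10; that is, with probability at least δ²/10 over X drawn from the measurement distribution of ψ, the amplitudes satisfy |φ X − ψ X| ≥ 2^(−100·n). -/
/-- If unit vectors `ψ, φ` on `{0,1}^n` satisfy `|1 − ⟨ψ, φ⟩| > δ` with
`2^(−n) < δ ≤ 1`, then with probability at least `δ²/10` over `X` drawn from the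
measurement distribution of `ψ`, the amplitudes differ noticeably:
`|φ X − ψ X| ≥ 2^(−100n)`. -/
theorem far_states_detectable (n : ℕ) (hn : 1 ≤ n)
    (ψ φ : (Fin n → Bool) → ℂ)
    (hψ : ∑ x : Fin n → Bool, ‖ψ x‖ ^ 2 = 1)
    (hφ : ∑ x : Fin n → Bool, ‖φ x‖ ^ 2 = 1)
    (δ : ℝ) (hδl : ((2 : ℝ) ^ n)⁻¹ < δ) (hδu : δ ≤ 1)
    (hfar : δ < ‖1 - ∑ x : Fin n → Bool, (starRingEnd ℂ) (ψ x) * φ x‖) :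
    δ ^ 2 / 10 ≤
      ∑ x ∈ Finset.univ.filter
          (fun x : Fin n → Bool => ((2 : ℝ) ^ (100 * n))⁻¹ ≤ ‖φ x - ψ x‖),
        ‖ψ x‖ ^ 2 := by
  classical
  set ε : ℝ := ((2 : ℝ) ^ (100 * n))⁻¹ with hεdef
  set S : Finset (Fin n → Bool) :=
    Finset.univ.filter (fun x : Fin n → Bool => ε ≤ ‖φ x - ψ x‖) with hSdef
  set T : Finset (Fin n → Bool) :=
    Finset.univ.filter (fun x : Fin n → Bool => ¬ ε ≤ ‖φ x - ψ x‖) with hTdef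
  have hδpos : 0 < δ := lt_trans (by positivity) hδl
  -- Σ conj ψ * ψ = 1
  have hone : (∑ x : Fin n → Bool, (starRingEnd ℂ) (ψ x) * ψ x) = 1 := by
    have hterm : ∀ x : Fin n → Bool,
        (starRingEnd ℂ) (ψ x) * ψ x = ((‖ψ x‖ ^ 2 : ℝ) : ℂ) := by
      intro x
      rw [Complex.sq_norm, Complex.normSq_eq_conj_mul_self]
    simp only [hterm]
    rw [← Complex.ofReal_sum, hψ, Complex.ofReal_one]
  have h1 : (1 : ℂ) - ∑ x : Fin n → Bool, (starRingEnd ℂ) (ψ x) * φ x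
      = ∑ x : Fin n → Bool, (starRingEnd ℂ) (ψ x) * (ψ x - φ x) := by
    rw [← hone, ← Finset.sum_sub_distrib]
    exact Finset.sum_congr rfl fun x _ => (mul_sub _ _ _).symm
  have h2 : ‖1 - ∑ x : Fin n → Bool, (starRingEnd ℂ) (ψ x) * φ x‖
      ≤ ∑ x : Fin n → Bool, ‖ψ x‖ * ‖ψ x - φ x‖ := by
    rw [h1]
    refine le_trans (norm_sum_le _ _) (le_of_eq ?_)
    refine Finset.sum_congr rfl fun x _ => ?_
    rw [norm_mul, Complex.norm_conj]
  -- each amplitude is at most 1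
  have habs1 : ∀ x : Fin n → Bool, ‖ψ x‖ ≤ 1 := by
    intro x
    have hx : ‖ψ x‖ ^ 2 ≤ 1 := by
      rw [← hψ]
      exact Finset.single_le_sum (f := fun x => ‖ψ x‖ ^ 2)
        (fun i _ => by positivity) (Finset.mem_univ x)
    nlinarith [norm_nonneg (ψ x)]
  -- bound the sum over the complement
  have hcard : ((T).card : ℝ)
      ≤ (2 : ℝ) ^ n := by
    have h := Finset.card_filter_le (Finset.univ : Finset (Fin n → Bool))
      (fun x => ¬ ε ≤ ‖φ x - ψ x‖)
    have hcu : (Finset.univ : Finset (Fin n → Bool)).card = 2 ^ n := by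
      simp [Finset.card_univ]
    rw [hcu] at h
    exact_mod_cast h
  have hεsmall : (2 : ℝ) ^ n * ε ≤ δ / 4 := by
    have h100 : (2 : ℝ) ^ (100 * n) = (2 : ℝ) ^ n * (2 : ℝ) ^ (99 * n) := by
      rw [← pow_add]; ring_nf
    have hpos99 : (0 : ℝ) < (2 : ℝ) ^ (99 * n) := by positivity
    have heq : (2 : ℝ) ^ n * ε = ((2 : ℝ) ^ (99 * n))⁻¹ := by
      rw [hεdef, h100, mul_inv]
      field_simp
    have hle : (2 : ℝ) ^ (n + 2) ≤ (2 : ℝ) ^ (99 * n) := by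
      apply pow_le_pow_right₀ one_le_two
      omega
    have h2n2 : ((2 : ℝ) ^ (99 * n))⁻¹ ≤ ((2 : ℝ) ^ (n + 2))⁻¹ := by
      apply inv_anti₀ (by positivity) hle
    have h4 : ((2 : ℝ) ^ (n + 2))⁻¹ = ((2 : ℝ) ^ n)⁻¹ / 4 := by
      rw [pow_add]; field_simp; ring
    rw [heq]
    calc ((2 : ℝ) ^ (99 * n))⁻¹ ≤ ((2 : ℝ) ^ n)⁻¹ / 4 := by rw [← h4]; exact h2n2
      _ ≤ δ / 4 := by linarith
  have hcomp : ∑ x ∈ T,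
      ‖ψ x‖ * ‖ψ x - φ x‖ ≤ δ / 4 := by
    have hterm : ∀ x ∈ T,
        ‖ψ x‖ * ‖ψ x - φ x‖ ≤ ε := by
      intro x hx
      rw [Finset.mem_filter] at hx
      have hx' : ‖ψ x - φ x‖ < ε := by
        rw [norm_sub_rev]
        exact lt_of_not_ge hx.2
      calc ‖ψ x‖ * ‖ψ x - φ x‖
          ≤ 1 * ε := mul_le_mul (habs1 x) hx'.le (norm_nonneg _) zero_le_one
        _ = ε := one_mul ε
    calc ∑ x ∈ T, ‖ψ x‖ * ‖ψ x - φ x‖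
        ≤ ∑ _x ∈ T, ε := Finset.sum_le_sum hterm
      _ = (T.card : ℝ) * ε := by rw [Finset.sum_const, nsmul_eq_mul]
      _ ≤ (2 : ℝ) ^ n * ε := by
          apply mul_le_mul_of_nonneg_right hcard (by positivity)
      _ ≤ δ / 4 := hεsmall
  -- split the sum
  have hsplit : ∑ x : Fin n → Bool, ‖ψ x‖ * ‖ψ x - φ x‖
      = (∑ x ∈ S, ‖ψ x‖ * ‖ψ x - φ x‖)
        + ∑ x ∈ T, ‖ψ x‖ * ‖ψ x - φ x‖ := by
    rw [hSdef, hTdef]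
    exact (Finset.sum_filter_add_sum_filter_not _ _ _).symm
  have hSlb : 3 * δ / 4 ≤ ∑ x ∈ S, ‖ψ x‖ * ‖ψ x - φ x‖ := by
    have := lt_of_lt_of_le hfar h2
    rw [hsplit] at this
    linarith
  -- Cauchy–Schwarz
  have hcs := Finset.sum_mul_sq_le_sq_mul_sq S
    (fun x => ‖ψ x‖) (fun x => ‖ψ x - φ x‖)
  have hB : ∑ x ∈ S, ‖ψ x - φ x‖ ^ 2 ≤ 4 := by
    have h1 : ∑ x ∈ S, ‖ψ x - φ x‖ ^ 2
        ≤ ∑ x : Fin n → Bool, ‖ψ x - φ x‖ ^ 2 := by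
      apply Finset.sum_le_sum_of_subset_of_nonneg (Finset.subset_univ S)
      intro i _ _; positivity
    have h2' : ∑ x : Fin n → Bool, ‖ψ x - φ x‖ ^ 2
        ≤ ∑ x : Fin n → Bool,
            (2 * ‖ψ x‖ ^ 2 + 2 * ‖φ x‖ ^ 2) := by
      apply Finset.sum_le_sum
      intro x _
      have ht : ‖ψ x - φ x‖ ≤ ‖ψ x‖ + ‖φ x‖ := by
        simpa [sub_eq_add_neg] using norm_add_le (ψ x) (-φ x)
      have ht2 : ‖ψ x - φ x‖ ^ 2
          ≤ (‖ψ x‖ + ‖φ x‖) ^ 2 :=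
        pow_le_pow_left₀ (norm_nonneg _) ht 2
      nlinarith [sq_nonneg (‖ψ x‖ - ‖φ x‖)]
    have h3 : ∑ x : Fin n → Bool,
        (2 * ‖ψ x‖ ^ 2 + 2 * ‖φ x‖ ^ 2) = 4 := by
      rw [Finset.sum_add_distrib, ← Finset.mul_sum, ← Finset.mul_sum, hψ, hφ]
      norm_num
    linarith
  have hPnn : 0 ≤ ∑ x ∈ S, ‖ψ x‖ ^ 2 :=
    Finset.sum_nonneg fun i _ => sq_nonneg _
  have hfin : (3 * δ / 4) ^ 2 ≤ (∑ x ∈ S, ‖ψ x‖ ^ 2) * 4 := by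
    calc (3 * δ / 4) ^ 2
        ≤ (∑ x ∈ S, ‖ψ x‖ * ‖ψ x - φ x‖) ^ 2 := by
          exact pow_le_pow_left₀ (by positivity) hSlb 2
      _ ≤ (∑ x ∈ S, ‖ψ x‖ ^ 2) * ∑ x ∈ S, ‖ψ x - φ x‖ ^ 2 :=
          hcs
      _ ≤ (∑ x ∈ S, ‖ψ x‖ ^ 2) * 4 := by
          apply mul_le_mul_of_nonneg_left hB hPnn
  nlinarith [hfin, hδpos]
end

section
/- Let E be a complex inner product space, m ≥ 1, G_1, …, G_m : E → E linear isometries, and δ a real number with 0 ≤ δ < 1/(72·m²). Let ψ_0 ∈ E be a unit vector, define ψ_i := G_i ψ_{i−1} for i = 1, …, m, and let ψ̃_0, …, ψ̃_m ∈ E be unit vectors with ψ̃_0 = ψ_0 and |1 − ⟨ψ̃_i, G_i ψ̃_{i−1}⟩| ≤ δ for every i ∈ {1, …, m}. Let P : E → E be a self-adjoint linear map of operator norm at most 1 (e.g. an orthogonal projection). If re⟨ψ_m, P ψ_m⟩ ≤ 1/3, then re⟨ψ̃_m, P ψ̃_m⟩ < 2/3. In particular, if the claimed final state accepts with probability at least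 2/3 while the true computation accepts with probability at most 1/3, then some step i must violate the local consistency condition |1 − ⟨ψ̃_i, G_i ψ̃_{i−1}⟩| ≤ δ. -/
/-- Soundness of local consistency checks: let `ψ i` be the true states of a
computation through isometric gates (`ψ 0` a unit vector, `ψ (i+1) = G i (ψ i)`),
and let `ψt i` be claimed unit states with `ψt 0 = ψ 0` and local consistency
`|1 − ⟨ψt (i+1), G i (ψt i)⟩| ≤ δ` at every step, where `0 ≤ δ < 1/(72 m²)`.
If `P` is a self-adjoint map of operator norm at most `1` (a projection onto
accepting outcomes) and the true final state accepts with probability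
`re⟨ψ m, P (ψ m)⟩ ≤ 1/3`, then the claimed final state accepts with probability
`re⟨ψt m, P (ψt m)⟩ < 2/3`. -/
theorem local_consistency_soundness {E : Type*} [NormedAddCommGroup E]
    [InnerProductSpace ℂ E] (m : ℕ) (hm : 1 ≤ m)
    (G : Fin m → E →ₗᵢ[ℂ] E) (δ : ℝ) (hδ0 : 0 ≤ δ) (hδ : δ < 1 / (72 * (m : ℝ) ^ 2))
    (ψ ψt : ℕ → E)
    (hψ0 : ‖ψ 0‖ = 1)
    (hψ : ∀ i : Fin m, ψ (i.val + 1) = G i (ψ i.val))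
    (hψt_unit : ∀ i ≤ m, ‖ψt i‖ = 1)
    (h0 : ψt 0 = ψ 0)
    (hloc : ∀ i : Fin m, ‖(1 - (inner ℂ (ψt (i.val + 1)) (G i (ψt i.val)) : ℂ))‖ ≤ δ)
    (P : E →L[ℂ] E) (hPnorm : ‖P‖ ≤ 1)
    (hPsa : ∀ x y : E, (inner ℂ x (P y) : ℂ) = (inner ℂ (P x) y : ℂ))
    (hacc : ((inner ℂ (ψ m) (P (ψ m)) : ℂ)).re ≤ 1 / 3) :
    ((inner ℂ (ψt m) (P (ψt m)) : ℂ)).re < 2 / 3 := by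

  have hmpos : (0:ℝ) < m := by exact_mod_cast Nat.lt_of_lt_of_le Nat.zero_lt_one hm
  set s := Real.sqrt (2*δ) with hs
  have hs0 : 0 ≤ s := Real.sqrt_nonneg _
  -- claimed states drift from true states by at most i*s after i steps
  have key : ∀ i, i ≤ m → ‖ψt i - ψ i‖ ≤ i * s := by
    intro i
    induction i with
    | zero => intro _; simp [h0]
    | succ n ih =>
      intro hi
      have hn : n < m := hi
      have ihn := ih (le_of_lt hn)
      have step : ‖ψt (n+1) - G ⟨n,hn⟩ (ψt n)‖ ≤ s := by
        have h1 : ‖ψt (n+1)‖ = 1 := hψt_unit _ hi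
        have h2 : ‖(G ⟨n,hn⟩) (ψt n)‖ = 1 := by
          rw [(G ⟨n,hn⟩).norm_map]; exact hψt_unit n (le_of_lt hn)
        have hre : (1:ℝ) - ((inner ℂ (ψt (n+1)) ((G ⟨n,hn⟩) (ψt n)) : ℂ)).re ≤ δ := by
          have habs := hloc ⟨n,hn⟩
          have h3 : ((1 - (inner ℂ (ψt (n+1)) ((G ⟨n,hn⟩) (ψt n)) : ℂ))).re ≤
              ‖(1 - (inner ℂ (ψt (n+1)) ((G ⟨n,hn⟩) (ψt n)) : ℂ))‖ :=
            Complex.re_le_norm _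
          simp only [Complex.sub_re, Complex.one_re] at h3
          linarith
        have hsq : ‖ψt (n+1) - G ⟨n,hn⟩ (ψt n)‖^2 ≤ 2*δ := by
          rw [@norm_sub_sq ℂ, h1, h2]
          simp only [RCLike.re_to_complex]
          nlinarith
        have := Real.sqrt_le_sqrt hsq
        rwa [Real.sqrt_sq (norm_nonneg _)] at this
      have hGeq : ‖G ⟨n,hn⟩ (ψt n) - ψ (n+1)‖ = ‖ψt n - ψ n‖ := by
        rw [hψ ⟨n,hn⟩, ← map_sub, (G ⟨n,hn⟩).norm_map]
      calc ‖ψt (n+1) - ψ (n+1)‖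
          ≤ ‖ψt (n+1) - G ⟨n,hn⟩ (ψt n)‖ + ‖G ⟨n,hn⟩ (ψt n) - ψ (n+1)‖ :=
            norm_sub_le_norm_sub_add_norm_sub _ _ _
        _ ≤ s + n * s := by rw [hGeq]; linarith
        _ = (n+1 : ℕ) * s := by push_cast; ring
  have hd := key m le_rfl
  -- s < 1/(6m)
  have hslt : s < 1 / (6 * m) := by
    rw [hs]
    rw [show (1:ℝ) / (6*m) = Real.sqrt ((1/(6*m))^2) from
      (Real.sqrt_sq (by positivity)).symm]
    apply Real.sqrt_lt_sqrt (by linarith)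
    have h36 : (1/(6*(m:ℝ)))^2 = 1/(36*(m:ℝ)^2) := by field_simp; ring
    rw [h36]
    have heq : (1:ℝ)/(36*(m:ℝ)^2) = 2*(1/(72*(m:ℝ)^2)) := by
      field_simp
      ring
    linarith
  have hdlt : ‖ψt m - ψ m‖ < 1/6 := by
    have : (m:ℝ) * s < (m:ℝ) * (1/(6*m)) := by
      apply mul_lt_mul_of_pos_left hslt hmpos
    have hms : (m:ℝ) * (1/(6*m)) = 1/6 := by field_simp
    linarith [hd]
  -- norms of ψ m
  have hψm : ‖ψ m‖ = 1 := by
    have : ∀ i, i ≤ m → ‖ψ i‖ = 1 := by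
      intro i
      induction i with
      | zero => intro _; exact hψ0
      | succ n ih =>
        intro hi
        have hn : n < m := hi
        rw [hψ ⟨n,hn⟩, (G ⟨n,hn⟩).norm_map]
        exact ih (le_of_lt hn)
    exact this m le_rfl
  have hψtm : ‖ψt m‖ = 1 := hψt_unit m le_rfl
  -- inner product perturbation
  have hsplit : (inner ℂ (ψt m) (P (ψt m)) : ℂ) - (inner ℂ (ψ m) (P (ψ m)) : ℂ)
      = (inner ℂ (ψt m - ψ m) (P (ψt m)) : ℂ) + (inner ℂ (ψ m) (P (ψt m - ψ m)) : ℂ) := by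
    rw [inner_sub_left, map_sub, inner_sub_right]
    ring
  have hPb : ∀ x : E, ‖P x‖ ≤ ‖x‖ := by
    intro x
    calc ‖P x‖ ≤ ‖P‖ * ‖x‖ := P.le_opNorm x
      _ ≤ 1 * ‖x‖ := by apply mul_le_mul_of_nonneg_right hPnorm (norm_nonneg _)
      _ = ‖x‖ := one_mul _
  have hA : ‖(inner ℂ (ψt m - ψ m) (P (ψt m)) : ℂ)‖ ≤ ‖ψt m - ψ m‖ := by
    calc ‖(inner ℂ (ψt m - ψ m) (P (ψt m)) : ℂ)‖ ≤ ‖ψt m - ψ m‖ * ‖P (ψt m)‖ :=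
          norm_inner_le_norm _ _
      _ ≤ ‖ψt m - ψ m‖ * 1 := by
          apply mul_le_mul_of_nonneg_left _ (norm_nonneg _)
          calc ‖P (ψt m)‖ ≤ ‖ψt m‖ := hPb _
            _ = 1 := hψtm
      _ = ‖ψt m - ψ m‖ := mul_one _
  have hB : ‖(inner ℂ (ψ m) (P (ψt m - ψ m)) : ℂ)‖ ≤ ‖ψt m - ψ m‖ := by
    calc ‖(inner ℂ (ψ m) (P (ψt m - ψ m)) : ℂ)‖ ≤ ‖ψ m‖ * ‖P (ψt m - ψ m)‖ :=
          norm_inner_le_norm _ _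
      _ ≤ 1 * ‖ψt m - ψ m‖ := by
          simp only [hψm, one_mul]; exact hPb _
      _ = ‖ψt m - ψ m‖ := one_mul _
  have hre : ((inner ℂ (ψt m) (P (ψt m)) : ℂ)).re - ((inner ℂ (ψ m) (P (ψ m)) : ℂ)).re
      ≤ 2 * ‖ψt m - ψ m‖ := by
    have h1 : ((inner ℂ (ψt m) (P (ψt m)) : ℂ) - (inner ℂ (ψ m) (P (ψ m)) : ℂ)).re
        ≤ ‖(inner ℂ (ψt m) (P (ψt m)) : ℂ) - (inner ℂ (ψ m) (P (ψ m)) : ℂ)‖ :=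
      Complex.re_le_norm _
    rw [hsplit] at h1
    have h2 : ‖(inner ℂ (ψt m - ψ m) (P (ψt m)) : ℂ) + (inner ℂ (ψ m) (P (ψt m - ψ m)) : ℂ)‖
        ≤ ‖(inner ℂ (ψt m - ψ m) (P (ψt m)) : ℂ)‖ + ‖(inner ℂ (ψ m) (P (ψt m - ψ m)) : ℂ)‖ :=
      norm_add_le _ _
    have h3 : ((inner ℂ (ψt m) (P (ψt m)) : ℂ) - (inner ℂ (ψ m) (P (ψ m)) : ℂ)).re
        = ((inner ℂ (ψt m) (P (ψt m)) : ℂ)).re - ((inner ℂ (ψ m) (P (ψ m)) : ℂ)).re := by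
      simp [Complex.sub_re]
    rw [hsplit] at h3
    rw [h3] at h1
    linarith
  linarith
end

section
/- Let f, g : {0,1}^n → Bool, let O_f and O_g be their phase oracles, let H_n be the Hadamard transform on ({0,1}^n → ℂ), and let e_0 be the indicator vector of the all-zeros string. Then the probability that measuring the final state of the forrelation circuit in the computational basis yields 0^n equals the square of the forrelator: |((H_n ∘ O_g ∘ H_n ∘ O_f ∘ H_n) e_0)(0^n)|² = Φ_{f,g}², where Φ_{f,g} := 2^{−3n/2} · Σ_{x, y ∈ {0,1}^n} (−1)^{f(x)} · (−1)^{x·y} · (−1)^{g(y)}. -/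
/-- The sign `(−1)^{x·y} = ∏ i (−1)^{x_i y_i} ∈ {±1} ⊆ ℂ` for bit strings
`x, y ∈ {0,1}^n`. -/
def fourierSign {n : ℕ} (x y : Fin n → Bool) : ℂ :=
  ∏ i : Fin n, (if x i && y i then (-1 : ℂ) else 1)

/-- The Hadamard transform on `({0,1}^n → ℂ)`:
`(H_n ψ)(y) = 2^{−n/2} ∑_x (−1)^{x·y} ψ(x)`. -/
noncomputable def hadamardTransform (n : ℕ) (ψ : (Fin n → Bool) → ℂ) :
    (Fin n → Bool) → ℂ :=
  fun y => (((2 : ℝ) ^ (-(n : ℝ) / 2) : ℝ) : ℂ) * ∑ x : Fin n → Bool, fourierSign x y * ψ x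

/-- The phase oracle of `f : {0,1}^n → Bool`: `(O_f ψ)(x) = (−1)^{f(x)} ψ(x)`. -/
def phaseOracle {n : ℕ} (f : (Fin n → Bool) → Bool) (ψ : (Fin n → Bool) → ℂ) :
    (Fin n → Bool) → ℂ :=
  fun x => (if f x then (-1 : ℂ) else 1) * ψ x

/-- The indicator vector of the all-zeros string `0^n`. -/
def zeroVec (n : ℕ) : (Fin n → Bool) → ℂ :=
  fun x => if x = (fun _ => false) then 1 else 0

/-- The real sign `(−1)^{x·y} = ∏ i (−1)^{x_i y_i} ∈ {±1} ⊆ ℝ`. -/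
def fourierSignR {n : ℕ} (x y : Fin n → Bool) : ℝ :=
  ∏ i : Fin n, (if x i && y i then (-1 : ℝ) else 1)

/-- The forrelator of `f, g : {0,1}^n → Bool`:
`Φ_{f,g} = 2^{−3n/2} ∑_{x,y} (−1)^{f(x)} (−1)^{x·y} (−1)^{g(y)}`, a real number. -/
noncomputable def forrelator (n : ℕ) (f g : (Fin n → Bool) → Bool) : ℝ :=
  (2 : ℝ) ^ (-(3 * (n : ℝ)) / 2) *
    ∑ x : Fin n → Bool, ∑ y : Fin n → Bool,
      (if f x then (-1 : ℝ) else 1) * fourierSignR x y * (if g y then (-1 : ℝ) else 1)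

/-- The probability that measuring the final state of the forrelation circuit
`H_n ∘ O_g ∘ H_n ∘ O_f ∘ H_n` applied to `|0^n⟩` yields the outcome `0^n`
equals the square of the forrelator `Φ_{f,g}²`. -/
theorem forrelation_circuit_probability {n : ℕ} (f g : (Fin n → Bool) → Bool) :
    ‖(hadamardTransform n (phaseOracle g (hadamardTransform n
        (phaseOracle f (hadamardTransform n (zeroVec n)))))) (fun _ => false)‖ ^ 2
      = (forrelator n f g) ^ 2 := by
  have hsign : ∀ (x y : Fin n → Bool), fourierSign x y = ((fourierSignR x y : ℝ) : ℂ) := by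
    intro x y
    simp [fourierSign, fourierSignR, apply_ite (Complex.ofReal)]
  have h0 : ∀ y : Fin n → Bool, fourierSign (fun _ => false) y = 1 := by
    intro y; simp [fourierSign]
  have h0' : ∀ y : Fin n → Bool, fourierSign y (fun _ => false) = 1 := by
    intro y; simp [fourierSign]
  have h1 : hadamardTransform n (zeroVec n)
      = fun _ => (((2 : ℝ) ^ (-(n : ℝ) / 2) : ℝ) : ℂ) := by
    funext y
    simp [hadamardTransform, zeroVec, Finset.sum_ite_eq', h0]
  set c : ℝ := (2 : ℝ) ^ (-(n : ℝ) / 2) with hc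
  have hc3 : (2 : ℝ) ^ (-(3 * (n : ℝ)) / 2) = c ^ 3 := by
    rw [hc, ← Real.rpow_natCast ((2:ℝ) ^ (-(n:ℝ)/2)) 3, ← Real.rpow_mul (by norm_num)]
    ring_nf
  have key : (hadamardTransform n (phaseOracle g (hadamardTransform n
        (phaseOracle f (hadamardTransform n (zeroVec n)))))) (fun _ => false)
      = ((forrelator n f g : ℝ) : ℂ) := by
    rw [h1]
    simp only [hadamardTransform, phaseOracle, forrelator, hc3, h0', hsign]
    push_cast
    rw [Finset.mul_sum, Finset.mul_sum]
    conv_rhs => simp only [Finset.mul_sum]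
    conv_rhs => rw [Finset.sum_comm]
    refine Finset.sum_congr rfl fun y _ => ?_
    simp only [Finset.mul_sum]
    refine Finset.sum_congr rfl fun x _ => ?_
    simp only [← hc, apply_ite (Complex.ofReal), Complex.ofReal_neg, Complex.ofReal_one]
    ring
  rw [key, Complex.norm_real, Real.norm_eq_abs, sq_abs]
end
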